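/- Every set of 10 points in the plane in general position, colored with 2 colors, contains a monochromatic empty triangle (three same-colored points whose triangle contains no point of the set in its interior). -/

import Mathlib

/-!
Let `R` be a color class with at least five points, let `k` be the number of points of `R`
inside its convex hull, and let `B` be the points of the other color inside that hull. A
triangulation of a set `P` in general position has `|P| - 2 + k(P)` triangles with disjoint
interiors and no point of `P` inside. If no empty triangle were monochromatic, each triangle of a
triangulation of `R` would contain a point of `B`, so `|R| - 2 + k ≤ |B|`; and each triangle of a
triangulation of `B` lies inside the hull of `R` and would contain a point of `R`, necessarily
one of the `k` interior ones, so `|B| - 2 ≤ k`. Hence `|R| ≤ 4`.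

Triangulations are built by induction on `|P|`: an interior point is removed and put back by
splitting the triangle containing it into three; in convex position an ear is cut off at a hull
vertex.
-/

open scoped Classical

noncomputable section

/-- A planar point set is in general position if no three distinct points are collinear. -/
def GenPos (S : Set (ℝ × ℝ)) : Prop :=
  ∀ p ∈ S, ∀ q ∈ S, ∀ r ∈ S, p ≠ q → p ≠ r → q ≠ r →
    ¬ Collinear ℝ ({p, q, r} : Set (ℝ × ℝ))

/-- Number of points of `S` strictly inside the triangle `a b c`. -/
def triPts (S : Finset (ℝ × ℝ)) (a b c : ℝ × ℝ) : ℕ :=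
  (S.filter (fun p => p ∈ interior (convexHull ℝ ({a, b, c} : Set (ℝ × ℝ))))).card

/-- `S` (colored by `χ`) contains a monochromatic triangle with at most `s` interior points. -/
def MonoTriangle {c : ℕ} (S : Finset (ℝ × ℝ)) (χ : ℝ × ℝ → Fin c) (s : ℕ) : Prop :=
  ∃ a ∈ S, ∃ b ∈ S, ∃ d ∈ S, a ≠ b ∧ a ≠ d ∧ b ≠ d ∧
    χ a = χ b ∧ χ b = χ d ∧ triPts S a b d ≤ s

open Topology

/-- Twice the signed area of the triangle `a b c`: positive iff `a b c` turns counterclockwise. -/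
def orient (a b c : ℝ × ℝ) : ℝ := (b.1 - a.1) * (c.2 - a.2) - (b.2 - a.2) * (c.1 - a.1)

section Orient

variable {a b c : ℝ × ℝ}

lemma orient_rotate (a b c : ℝ × ℝ) : orient a b c = orient b c a := by unfold orient; ring

lemma orient_swap (a b c : ℝ × ℝ) : orient a c b = -orient a b c := by unfold orient; ring

lemma orient_swap_left (a b c : ℝ × ℝ) : orient b a c = -orient a b c := by unfold orient; ring

@[simp] lemma orient_apply_first (a b : ℝ × ℝ) : orient a b a = 0 := by unfold orient; ring

@[simp] lemma orient_apply_second (a b : ℝ × ℝ) : orient a b b = 0 := by unfold orient; ring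

lemma ne_of_orient_ne_zero (h : orient a b c ≠ 0) : a ≠ b ∧ a ≠ c ∧ b ≠ c := by
  refine ⟨?_, ?_, ?_⟩ <;> rintro rfl <;> exact h (by unfold orient; ring)

lemma orient_add_smul_sub (a b v q : ℝ × ℝ) (s : ℝ) :
    orient a b (v + s • (q - v)) = (1 - s) * orient a b v + s * orient a b q := by
  simp only [orient, Prod.fst_add, Prod.snd_add, Prod.smul_fst, Prod.smul_snd, Prod.fst_sub,
    Prod.snd_sub, smul_eq_mul]
  ring

lemma orient_add_orient_add_orient (a b c q : ℝ × ℝ) :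
    orient b c q + orient c a q + orient a b q = orient a b c := by unfold orient; ring

/-- Cramer's rule: the barycentric coordinates of `q` in the triangle `a b c`. -/
lemma orient_div_smul_add_eq (hD : orient a b c ≠ 0) (q : ℝ × ℝ) :
    (orient b c q / orient a b c) • a + (orient c a q / orient a b c) • b +
      (orient a b q / orient a b c) • c = q := by
  have : orient a b c • q = orient b c q • a + orient c a q • b + orient a b q • c := by
    ext <;> simp only [orient, Prod.smul_fst, Prod.smul_snd, Prod.fst_add, Prod.snd_add,
      smul_eq_mul] <;> ring
  simp only [div_eq_inv_mul, mul_smul, ← smul_add, ← this, inv_smul_smul₀ hD]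

lemma continuous_orient (a b : ℝ × ℝ) : Continuous (orient a b) := by
  unfold orient; fun_prop

lemma exists_eq_smul_of_cross_eq_zero {p q : ℝ × ℝ} (hp : p ≠ 0)
    (h : p.1 * q.2 - p.2 * q.1 = 0) : ∃ l : ℝ, q = l • p := by
  by_cases h1 : p.1 = 0
  · have h2 : p.2 ≠ 0 := fun h2 => hp (Prod.ext h1 h2)
    refine ⟨q.2 / p.2, Prod.ext ?_ ?_⟩ <;> simp only [Prod.smul_fst, Prod.smul_snd, smul_eq_mul]
    · have : p.2 * q.1 = 0 := by simpa [h1] using h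
      field_simp
      simp [h1, (mul_eq_zero.mp this).resolve_left h2]
    · field_simp
  · refine ⟨q.1 / p.1, Prod.ext ?_ ?_⟩ <;> simp only [Prod.smul_fst, Prod.smul_snd, smul_eq_mul]
    · field_simp
    · field_simp
      linarith

lemma collinear_of_orient_eq_zero (hab : a ≠ b) (h : orient a b c = 0) :
    Collinear ℝ ({a, b, c} : Set (ℝ × ℝ)) := by
  obtain ⟨l, hl⟩ := exists_eq_smul_of_cross_eq_zero (sub_ne_zero.mpr hab.symm)
    (p := b - a) (q := c - a) (by simpa [orient] using h)
  have hc : c ∈ line[ℝ, a, b] := by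
    rw [show c = AffineMap.lineMap a b l by
      rw [AffineMap.lineMap_apply, vsub_eq_sub, vadd_eq_add, ← hl, sub_add_cancel]]
    exact AffineMap.lineMap_mem_affineSpan_pair l a b
  rw [Set.pair_comm, Set.insert_comm]
  exact collinear_insert_of_mem_affineSpan_pair hc

lemma GenPos.orient_ne_zero {S : Set (ℝ × ℝ)} (hS : GenPos S) (ha : a ∈ S) (hb : b ∈ S)
    (hc : c ∈ S) (hab : a ≠ b) (hac : a ≠ c) (hbc : b ≠ c) : orient a b c ≠ 0 :=
  fun h => hS a ha b hb c hc hab hac hbc (collinear_of_orient_eq_zero hab h)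

lemma GenPos.mono {S S' : Set (ℝ × ℝ)} (hS : GenPos S) (h : S' ⊆ S) : GenPos S' :=
  fun p hp q hq r hr => hS p (h hp) q (h hq) r (h hr)

end Orient

section HalfPlane

variable {a b q : ℝ × ℝ}

lemma convex_setOf_orient_nonneg (a b : ℝ × ℝ) : Convex ℝ {z | 0 ≤ orient a b z} := by
  intro y hy z hz s t hs ht hst
  obtain rfl : t = 1 - s := by linarith
  have : orient a b (s • y + (1 - s) • z) = s * orient a b y + (1 - s) * orient a b z := by
    simp only [orient, Prod.fst_add, Prod.snd_add, Prod.smul_fst, Prod.smul_snd, smul_eq_mul]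
    ring
  simp only [Set.mem_ofPred_eq, this] at hy hz ⊢
  exact add_nonneg (mul_nonneg hs hy) (mul_nonneg ht hz)

lemma convexHull_subset_setOf_orient_nonneg {s : Set (ℝ × ℝ)} (h : ∀ z ∈ s, 0 ≤ orient a b z) :
    convexHull ℝ s ⊆ {z | 0 ≤ orient a b z} :=
  convexHull_min h (convex_setOf_orient_nonneg a b)

lemma exists_pos_add_smul_mem {E : Type*} [AddCommGroup E] [Module ℝ E] [TopologicalSpace E]
    [ContinuousAdd E] [ContinuousSMul ℝ E] {s : Set E} {x : E} (hx : x ∈ interior s) (y : E) :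
    ∃ ε : ℝ, 0 < ε ∧ x + ε • y ∈ s := by
  have h : ∀ᶠ ε in 𝓝 (0 : ℝ), x + ε • y ∈ s :=
    ((continuous_const.add (continuous_id.smul continuous_const)).tendsto' 0 x (by simp)).eventually
      (mem_interior_iff_mem_nhds.mp hx)
  obtain ⟨ε, hεs, hε⟩ := ((h.filter_mono nhdsWithin_le_nhds).and
    (self_mem_nhdsWithin : Set.Ioi (0 : ℝ) ∈ 𝓝[>] 0)).exists
  exact ⟨ε, hε, hεs⟩

/-- Pushing `q` slightly to the right of the line `a b` would leave the half-plane. -/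
lemma orient_pos_of_mem_interior {s : Set (ℝ × ℝ)} (hab : a ≠ b)
    (hs : ∀ z ∈ s, 0 ≤ orient a b z) (hq : q ∈ interior s) : 0 < orient a b q := by
  obtain ⟨ε, hε, hmem⟩ := exists_pos_add_smul_mem hq (b.2 - a.2, a.1 - b.1)
  have hn : 0 < (b.1 - a.1) ^ 2 + (b.2 - a.2) ^ 2 := by
    rcases ne_or_eq a.1 b.1 with h | h
    · have := sub_ne_zero.mpr h.symm
      positivity
    · have := sub_ne_zero.mpr fun h' => hab (Prod.ext h h'.symm)
      positivity
  have hshift : orient a b (q + ε • (b.2 - a.2, a.1 - b.1)) =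
      orient a b q - ε * ((b.1 - a.1) ^ 2 + (b.2 - a.2) ^ 2) := by
    simp only [orient, Prod.fst_add, Prod.snd_add, Prod.smul_mk, smul_eq_mul]
    ring
  linarith [hshift ▸ hs _ hmem, mul_pos hε hn]

end HalfPlane

section Triangle

variable {a b c q u v w x : ℝ × ℝ}

def tri (a b c : ℝ × ℝ) : Set (ℝ × ℝ) := convexHull ℝ {a, b, c}

lemma tri_subset_tri (ha : a ∈ tri u v w) (hb : b ∈ tri u v w) (hc : c ∈ tri u v w) :
    tri a b c ⊆ tri u v w :=
  convexHull_min (by simp [Set.insert_subset_iff, ha, hb, hc]) (convex_convexHull ℝ _)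

lemma tri_subset_inter_setOf_orient_nonneg (hD : 0 ≤ orient a b c) :
    tri a b c ⊆ {z | 0 ≤ orient b c z} ∩ {z | 0 ≤ orient c a z} ∩ {z | 0 ≤ orient a b z} := by
  have hbca : 0 ≤ orient b c a := orient_rotate a b c ▸ hD
  have hcab : 0 ≤ orient c a b := orient_rotate b c a ▸ hbca
  refine convexHull_min ?_ (((convex_setOf_orient_nonneg b c).inter
    (convex_setOf_orient_nonneg c a)).inter (convex_setOf_orient_nonneg a b))
  simp [Set.insert_subset_iff, hD, hbca, hcab]

lemma mem_tri_iff (hD : 0 < orient a b c) :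
    q ∈ tri a b c ↔ 0 ≤ orient b c q ∧ 0 ≤ orient c a q ∧ 0 ≤ orient a b q := by
  refine ⟨fun hq => ?_, fun ⟨h₁, h₂, h₃⟩ => ?_⟩
  · obtain ⟨⟨h₁, h₂⟩, h₃⟩ := tri_subset_inter_setOf_orient_nonneg hD.le hq
    exact ⟨h₁, h₂, h₃⟩
  rw [← orient_div_smul_add_eq hD.ne' q]
  have := (convex_convexHull ℝ {a, b, c}).sum_mem (t := Finset.univ)
    (w := ![orient b c q / orient a b c, orient c a q / orient a b c, orient a b q / orient a b c])
    (z := ![a, b, c]) ?_ ?_ ?_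
  · simpa [tri, Fin.sum_univ_three] using this
  · intro i _; fin_cases i <;> simp <;> positivity
  · simp [Fin.sum_univ_three, ← add_div, orient_add_orient_add_orient, hD.ne']
  · intro i _; fin_cases i <;> exact subset_convexHull ℝ _ (by simp)

lemma mem_interior_tri_iff (hD : 0 < orient a b c) :
    q ∈ interior (tri a b c) ↔ 0 < orient b c q ∧ 0 < orient c a q ∧ 0 < orient a b q := by
  obtain ⟨hab, hac, hbc⟩ := ne_of_orient_ne_zero hD.ne'
  have hs := tri_subset_inter_setOf_orient_nonneg hD.le
  refine ⟨fun hq => ⟨orient_pos_of_mem_interior hbc (fun z hz => (hs hz).1.1) hq,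
    orient_pos_of_mem_interior hac.symm (fun z hz => (hs hz).1.2) hq,
    orient_pos_of_mem_interior hab (fun z hz => (hs hz).2) hq⟩, fun hq => ?_⟩
  refine interior_maximal (t := {z | 0 < orient b c z ∧ 0 < orient c a z ∧ 0 < orient a b z})
    (fun z hz => (mem_tri_iff hD).2 ⟨hz.1.le, hz.2.1.le, hz.2.2.le⟩) ?_ hq
  exact (isOpen_lt continuous_const (continuous_orient b c)).inter
    ((isOpen_lt continuous_const (continuous_orient c a)).inter
      (isOpen_lt continuous_const (continuous_orient a b)))

lemma vertex_notMem_interior_tri (hD : 0 < orient a b c) :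
    a ∉ interior (tri a b c) ∧ b ∉ interior (tri a b c) ∧ c ∉ interior (tri a b c) := by
  simp [mem_interior_tri_iff hD, orient_rotate a b c]

lemma GenPos.mem_interior_tri {S : Set (ℝ × ℝ)} (hS : GenPos S) (ha : a ∈ S) (hb : b ∈ S)
    (hc : c ∈ S) (hx : x ∈ S) (hxa : x ≠ a) (hxb : x ≠ b) (hxc : x ≠ c) (hD : 0 < orient a b c)
    (hxT : x ∈ tri a b c) : x ∈ interior (tri a b c) := by
  obtain ⟨hab, hac, hbc⟩ := ne_of_orient_ne_zero hD.ne'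
  obtain ⟨h₁, h₂, h₃⟩ := (mem_tri_iff hD).1 hxT
  exact (mem_interior_tri_iff hD).2
    ⟨h₁.lt_of_ne' (hS.orient_ne_zero hb hc hx hbc hxb.symm hxc.symm),
      h₂.lt_of_ne' (hS.orient_ne_zero hc ha hx hac.symm hxc.symm hxa.symm),
      h₃.lt_of_ne' (hS.orient_ne_zero ha hb hx hab hxa.symm hxb.symm)⟩

lemma mem_segment_of_mem_tri (hD : 0 < orient a b c) (hq : q ∈ tri a b c)
    (h : orient b c q = 0) : q ∈ segment ℝ b c := by
  obtain ⟨-, h₂, h₃⟩ := (mem_tri_iff hD).1 hq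
  have hsum := orient_add_orient_add_orient a b c q
  refine ⟨orient c a q / orient a b c, orient a b q / orient a b c, by positivity, by positivity,
    by rw [← add_div, div_eq_one_iff_eq hD.ne']; linarith, ?_⟩
  simpa [h] using orient_div_smul_add_eq hD.ne' q

/-- The signs of `orient x a q`, `orient x b q`, `orient x c q` cannot all agree strictly: their
combination with the positive barycentric weights of `x` vanishes. -/
lemma tri_subset_union_of_mem_interior (hD : 0 < orient a b c) (hx : x ∈ interior (tri a b c)) :
    tri a b c ⊆ tri x a b ∪ tri x b c ∪ tri x c a := by
  obtain ⟨wa, wb, wc⟩ := (mem_interior_tri_iff hD).1 hx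
  have hxab : 0 < orient x a b := by rwa [orient_rotate]
  have hxbc : 0 < orient x b c := by rwa [orient_rotate]
  have hxca : 0 < orient x c a := by rwa [orient_rotate]
  intro q hq
  obtain ⟨qa, qb, qc⟩ := (mem_tri_iff hD).1 hq
  have key : orient b c x * orient x a q + orient c a x * orient x b q +
      orient a b x * orient x c q = 0 := by unfold orient; ring
  simp only [Set.mem_union, mem_tri_iff hxab, mem_tri_iff hxbc, mem_tri_iff hxca,
    orient_swap_left x a q, orient_swap_left x b q, orient_swap_left x c q]
  rcases le_total (orient x a q) 0 with hA | hA
  · rcases le_total 0 (orient x c q) with hC | hC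
    · exact Or.inr ⟨qb, by linarith, hC⟩
    have := mul_nonpos_of_nonneg_of_nonpos wa.le hA
    have := mul_nonpos_of_nonneg_of_nonpos wc.le hC
    exact Or.inl (Or.inr ⟨qa, by linarith, nonneg_of_mul_nonneg_right (by linarith) wb⟩)
  · rcases le_total (orient x b q) 0 with hB | hB
    · exact Or.inl (Or.inl ⟨qc, by linarith, hA⟩)
    rcases le_total (orient x c q) 0 with hC | hC
    · exact Or.inl (Or.inr ⟨qa, by linarith, hB⟩)
    have := mul_nonneg wa.le hA
    have := mul_nonneg wc.le hC
    have : orient c a x * orient x b q ≤ 0 := by linarith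
    exact Or.inl (Or.inl ⟨qc, by linarith [nonpos_of_mul_nonpos_right this wb], hA⟩)

lemma disjoint_interior_tri (h₁ : 0 < orient x a b) (h₂ : 0 < orient x b c) :
    Disjoint (interior (tri x a b)) (interior (tri x b c)) := by
  refine Set.disjoint_left.2 fun q hq hq' => ?_
  have := ((mem_interior_tri_iff h₁).1 hq).2.1
  have := ((mem_interior_tri_iff h₂).1 hq').2.2
  linarith [orient_swap_left x b q]

/-- The point where the segment from `v` to `q'` crosses the line `u w`; it lies on `[u, w] ⊆ A`. -/
lemma exists_pos_add_smul_sub_mem_tri_and_mem {A : Set (ℝ × ℝ)} {q' : ℝ × ℝ} (hA : Convex ℝ A)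
    (hu : u ∈ A) (hw : w ∈ A) (hD : 0 < orient v u w) (hAwu : ∀ z ∈ A, 0 ≤ orient w u z)
    (hAu : ∀ z ∈ A, 0 ≤ orient v u z) (hAw : ∀ z ∈ A, 0 ≤ orient w v z) (hq' : q' ∈ A) :
    ∃ t : ℝ, 0 < t ∧ v + t • (q' - v) ∈ tri v u w ∧ v + t • (q' - v) ∈ A := by
  have hσ : orient u w q' ≤ 0 := by linarith [hAwu q' hq', orient_swap_left u w q']
  set t := orient v u w / (orient v u w - orient u w q')
  have ht0 : 0 < t := div_pos hD (by linarith)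
  have hy_line : orient u w (v + t • (q' - v)) = 0 := by
    have : t * (orient v u w - orient u w q') = orient v u w := div_mul_cancel₀ _ (by linarith)
    rw [orient_add_smul_sub, orient_rotate u w v, orient_rotate w v u]
    linear_combination -this
  have hy_tri : v + t • (q' - v) ∈ tri v u w := by
    refine (mem_tri_iff hD).2 ⟨hy_line.ge, ?_, ?_⟩ <;> rw [orient_add_smul_sub] <;>
      simp only [orient_apply_first, orient_apply_second, mul_zero, zero_add]
    · exact mul_nonneg ht0.le (hAw q' hq')
    · exact mul_nonneg ht0.le (hAu q' hq')
  exact ⟨t, ht0, hy_tri, hA.segment_subset hu hw (mem_segment_of_mem_tri hD hy_tri hy_line)⟩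

/-- A segment from `v` to a point `q'` of `A` crosses `[u, w]` at some `y`, and is covered by
`[v, y] ⊆ tri v u w` and `[y, q'] ⊆ A`. -/
lemma convexJoin_subset_tri_union {A : Set (ℝ × ℝ)} (hA : Convex ℝ A) (hu : u ∈ A) (hw : w ∈ A)
    (hD : 0 < orient v u w) (hAwu : ∀ z ∈ A, 0 ≤ orient w u z)
    (hAu : ∀ z ∈ A, 0 ≤ orient v u z) (hAw : ∀ z ∈ A, 0 ≤ orient w v z) :
    convexJoin ℝ {v} A ⊆ tri v u w ∪ A := by
  intro q hq
  obtain ⟨_, hv, q', hq', hseg⟩ := mem_convexJoin.1 hq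
  rw [Set.mem_singleton_iff.1 hv, segment_eq_image'] at hseg
  obtain ⟨s, ⟨hs0, hs1⟩, rfl⟩ := hseg
  obtain ⟨t, ht0, hy_tri, hy_A⟩ :=
    exists_pos_add_smul_sub_mem_tri_and_mem hA hu hw hD hAwu hAu hAw hq'
  have hv_tri : v ∈ tri v u w := subset_convexHull ℝ _ (by simp)
  rcases le_or_gt s t with hst | hts
  · have := (convex_convexHull ℝ {v, u, w}).add_smul_sub_mem hv_tri hy_tri
      ⟨div_nonneg hs0 ht0.le, (div_le_one ht0).2 hst⟩
    rw [add_sub_cancel_left, smul_smul, div_mul_cancel₀ _ ht0.ne'] at this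
    exact Or.inl this
  · have ht1 : t < 1 := hts.trans_le hs1
    have := hA.add_smul_sub_mem hy_A hq'
      ⟨div_nonneg (sub_nonneg.2 hts.le) (sub_nonneg.2 ht1.le),
        (div_le_one (sub_pos.2 ht1)).2 (by linarith)⟩
    have hq'y : q' - (v + t • (q' - v)) = (1 - t) • (q' - v) := by module
    rw [hq'y, smul_smul, div_mul_cancel₀ _ (sub_pos.2 ht1).ne'] at this
    exact Or.inr (by convert this using 1; module)

end Triangle

section PointSet

variable {P : Finset (ℝ × ℝ)} {u v w x : ℝ × ℝ}

def interiorPoints (P : Finset (ℝ × ℝ)) : Finset (ℝ × ℝ) :=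
  P.filter (· ∈ interior (convexHull ℝ (P : Set (ℝ × ℝ))))

/-- By Krein–Milman the hull of `P` is the hull of its extreme points, and an interior point is
not extreme. -/
lemma convexHull_erase_eq (hx : x ∈ interior (convexHull ℝ (P : Set (ℝ × ℝ)))) :
    convexHull ℝ ((P.erase x : Finset (ℝ × ℝ)) : Set (ℝ × ℝ)) = convexHull ℝ (P : Set (ℝ × ℝ)) := by
  refine (convexHull_mono (by simp)).antisymm ?_
  have hext : (convexHull ℝ (P : Set (ℝ × ℝ))).extremePoints ℝ ⊆ (P.erase x : Set (ℝ × ℝ)) := by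
    intro z hz
    have hzx : z ≠ x := fun h =>
      Set.disjoint_left.1 (disjoint_interior_extremePoints _) (h ▸ hx) hz
    simpa [hzx] using extremePoints_convexHull_subset hz
  rw [← closure_convexHull_extremePoints (P.finite_toSet.isCompact_convexHull (𝕜 := ℝ))
    (convex_convexHull ℝ _)]
  exact closure_minimal (convexHull_mono hext)
    ((P.erase x).finite_toSet.isClosed_convexHull (𝕜 := ℝ))

lemma interiorPoints_erase (hx : x ∈ interiorPoints P) :
    interiorPoints (P.erase x) = (interiorPoints P).erase x := by
  have := convexHull_erase_eq (Finset.mem_filter.1 hx).2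
  ext z
  simp only [interiorPoints, Finset.mem_filter, Finset.mem_erase, this]
  tauto

lemma exists_injOn_fst_add_mul_snd (P : Finset (ℝ × ℝ)) :
    ∃ t : ℝ, Set.InjOn (fun z : ℝ × ℝ => z.1 + t * z.2) P := by
  obtain ⟨t, ht⟩ := Infinite.exists_notMem_finset
    ((P ×ˢ P).image fun p : (ℝ × ℝ) × (ℝ × ℝ) => -(p.1.1 - p.2.1) / (p.1.2 - p.2.2))
  refine ⟨t, fun a ha b hb hab => ?_⟩
  simp only at hab
  by_cases h2 : a.2 = b.2
  · exact Prod.ext (by rw [h2] at hab; linarith) h2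
  · refine absurd (Finset.mem_image.2 ⟨(a, b), Finset.mem_product.2 ⟨ha, hb⟩, ?_⟩) ht
    field_simp [sub_ne_zero.2 h2]
    linarith

lemma orient_pos_of_wedge (hP : GenPos (P : Set (ℝ × ℝ))) (h3 : 3 ≤ P.card) (hv : v ∈ P)
    (hu : u ∈ P) (hw : w ∈ P) (hvu : v ≠ u) (hvw : v ≠ w)
    (hwedge : ∀ z ∈ P, 0 ≤ orient v u z ∧ 0 ≤ orient w v z) : 0 < orient v u w := by
  have huw : u ≠ w := by
    rintro rfl
    obtain ⟨z, hz, hzu⟩ := (P.erase v).exists_mem_ne (by rw [Finset.card_erase_of_mem hv]; omega) u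
    obtain ⟨hzv, hzP⟩ := Finset.mem_erase.1 hz
    refine hP.orient_ne_zero hv hu hzP hvu (Ne.symm hzv) (Ne.symm hzu)
      (le_antisymm ?_ (hwedge z hzP).1)
    linarith [(hwedge z hzP).2, orient_rotate u v z, orient_swap v u z]
  exact (hwedge w hw).1.lt_of_ne' (hP.orient_ne_zero hv hu hw hvu hvw huw)

/-- `v` is a vertex of the convex hull and `u`, `w` are its neighbours on it. Take `v` minimising
a generic linear functional `f`; then `u` and `w` minimise and maximise, seen from `v`, the slope
`g / f` for the orthogonal functional `g`. -/
lemma exists_wedge (hP : GenPos (P : Set (ℝ × ℝ))) (h3 : 3 ≤ P.card) :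
    ∃ v ∈ P, ∃ u ∈ P, ∃ w ∈ P, 0 < orient v u w ∧ ∀ z ∈ P, 0 ≤ orient v u z ∧ 0 ≤ orient w v z := by
  obtain ⟨t, ht⟩ := exists_injOn_fst_add_mul_snd P
  set f : ℝ × ℝ → ℝ := fun z => z.1 + t * z.2
  obtain ⟨v, hv, hvmin⟩ := P.exists_min_image f (Finset.card_pos.1 (by omega))
  have hf : ∀ z ∈ P.erase v, 0 < f z - f v := fun z hz =>
    sub_pos.2 <| (hvmin z (Finset.mem_of_mem_erase hz)).lt_of_ne fun h =>
      Finset.ne_of_mem_erase hz (ht (Finset.mem_of_mem_erase hz) hv h.symm)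
  set κ : ℝ × ℝ → ℝ := fun z => ((z.2 - t * z.1) - (v.2 - t * v.1)) / (f z - f v)
  have hκ : ∀ z ∈ P.erase v, ∀ z' ∈ P.erase v, κ z ≤ κ z' → 0 ≤ orient v z z' := by
    intro z hz z' hz' hle
    rw [div_le_div_iff₀ (hf z hz) (hf z' hz')] at hle
    have : 0 ≤ (1 + t ^ 2) * orient v z z' := by simp only [f, orient] at hle ⊢; nlinarith
    exact nonneg_of_mul_nonneg_right this (by positivity)
  have hne : (P.erase v).Nonempty := Finset.card_pos.1 (by rw [Finset.card_erase_of_mem hv]; omega)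
  obtain ⟨u, hu, humin⟩ := (P.erase v).exists_min_image κ hne
  obtain ⟨w, hw, hwmax⟩ := (P.erase v).exists_max_image κ hne
  have hwedge : ∀ z ∈ P, 0 ≤ orient v u z ∧ 0 ≤ orient w v z := by
    intro z hz
    rcases eq_or_ne z v with rfl | hzv
    · simp
    have hz' := Finset.mem_erase.2 ⟨hzv, hz⟩
    refine ⟨hκ u hu z hz' (humin z hz'), ?_⟩
    rw [← orient_rotate, ← orient_rotate]
    exact hκ z hz' w hw (hwmax z hz')
  obtain ⟨hvu, huP⟩ := Finset.mem_erase.1 hu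
  obtain ⟨hvw, hwP⟩ := Finset.mem_erase.1 hw
  exact ⟨v, hv, u, huP, w, hwP,
    orient_pos_of_wedge hP h3 hv huP hwP hvu.symm hvw.symm hwedge, hwedge⟩

end PointSet

lemma Set.PairwiseDisjoint.card_le_of_forall_exists_mem {ι α : Type*} {F : Finset ι}
    {Q : Finset α} {s : ι → Set α} (hs : (F : Set ι).PairwiseDisjoint s)
    (hQ : ∀ i ∈ F, ∃ q ∈ Q, q ∈ s i) :
    F.card ≤ Q.card := by
  rcases F.eq_empty_or_nonempty with rfl | ⟨i, hi⟩
  · simp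
  have : Nonempty α := ⟨(hQ i hi).choose⟩
  choose! g hgQ hgs using hQ
  refine Finset.card_le_card_of_injOn g hgQ fun i hi j hj hij => ?_
  by_contra hne
  exact Set.disjoint_left.1 (hs hi hj hne) (hgs i hi) (hij ▸ hgs j hj)

lemma convexHull_insert_eq {E : Type*} [AddCommGroup E] [Module ℝ E] {s : Set E} {x : E}
    (hx : x ∈ convexHull ℝ s) :
    convexHull ℝ (insert x s) = convexHull ℝ s :=
  (convexHull_min (Set.insert_subset hx (subset_convexHull ℝ _)) (convex_convexHull ℝ _)).antisymm
    (convexHull_mono (Set.subset_insert _ _))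

lemma convexHull_coe_triple (a b c : ℝ × ℝ) :
    convexHull ℝ (({a, b, c} : Finset (ℝ × ℝ)) : Set (ℝ × ℝ)) = tri a b c := by
  simp [tri]

structure IsTriangulation (P : Finset (ℝ × ℝ)) (F : Finset (Finset (ℝ × ℝ))) : Prop where
  subset : ∀ T ∈ F, T ⊆ P
  card_eq : ∀ T ∈ F, T.card = 3
  empty : ∀ T ∈ F, ∀ p ∈ P, p ∉ interior (convexHull ℝ (T : Set (ℝ × ℝ)))
  pairwiseDisjoint :
    (F : Set (Finset (ℝ × ℝ))).PairwiseDisjoint fun T => interior (convexHull ℝ (T : Set (ℝ × ℝ)))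
  covers : convexHull ℝ (P : Set (ℝ × ℝ)) ⊆ ⋃ T ∈ F, convexHull ℝ (T : Set (ℝ × ℝ))

section Triangulation

variable {P T : Finset (ℝ × ℝ)} {F G : Finset (Finset (ℝ × ℝ))} {a b c u v w x : ℝ × ℝ}

lemma exists_eq_triple_orient_pos (hP : GenPos (P : Set (ℝ × ℝ))) (hT : T ⊆ P) (h3 : T.card = 3) :
    ∃ a b c, T = {a, b, c} ∧ 0 < orient a b c := by
  obtain ⟨a, b, c, hab, hac, hbc, rfl⟩ := Finset.card_eq_three.1 h3
  have hD := hP.orient_ne_zero (hT (by simp)) (hT (by simp)) (hT (by simp)) hab hac hbc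
  rcases hD.lt_or_gt with hneg | hpos
  · exact ⟨a, c, b, by rw [Finset.pair_comm], by rw [orient_swap]; linarith⟩
  · exact ⟨a, b, c, rfl, hpos⟩

lemma interiorPoints_eq_empty_of_card_eq_three (hP : GenPos (P : Set (ℝ × ℝ)))
    (h3 : P.card = 3) : interiorPoints P = ∅ := by
  obtain ⟨a, b, c, rfl, hD⟩ := exists_eq_triple_orient_pos hP subset_rfl h3
  ext z
  simp only [interiorPoints, convexHull_coe_triple, Finset.mem_filter, Finset.mem_insert,
    Finset.mem_singleton, Finset.notMem_empty, iff_false, not_and]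
  rintro (rfl | rfl | rfl) <;> simp [vertex_notMem_interior_tri hD]

lemma isTriangulation_singleton (hP : GenPos (P : Set (ℝ × ℝ))) (h3 : P.card = 3) :
    IsTriangulation P {P} where
  subset := by simp
  card_eq := by simpa using h3
  empty T hT p hp h := by
    rw [Finset.mem_singleton.1 hT] at h
    exact Finset.notMem_empty p
      (interiorPoints_eq_empty_of_card_eq_three hP h3 ▸ Finset.mem_filter.2 ⟨hp, h⟩)
  pairwiseDisjoint := by simp
  covers := by simp

lemma pairwiseDisjoint_subdivision (h₁ : 0 < orient x a b) (h₂ : 0 < orient x b c)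
    (h₃ : 0 < orient x c a) :
    (({{x, a, b}, {x, b, c}, {x, c, a}} : Finset (Finset (ℝ × ℝ))) : Set (Finset (ℝ × ℝ))
      ).PairwiseDisjoint fun T => interior (convexHull ℝ (T : Set (ℝ × ℝ))) := by
  simp only [Finset.coe_insert, Finset.coe_singleton, Set.pairwiseDisjoint_insert,
    Set.pairwiseDisjoint_singleton, Set.mem_insert_iff, Set.mem_singleton_iff, true_and]
  refine ⟨fun S hS _ => ?_, fun S hS _ => ?_⟩
  · rcases hS with rfl
    simpa only [convexHull_coe_triple, tri] using disjoint_interior_tri h₂ h₃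
  · rcases hS with rfl | rfl
    · simpa only [convexHull_coe_triple, tri] using disjoint_interior_tri h₁ h₂
    · simpa only [convexHull_coe_triple, tri] using (disjoint_interior_tri h₃ h₁).symm

lemma notMem_interior_tri_of_mem_interior {p q z : ℝ × ℝ} (hD : 0 < orient a b c)
    (hx : x ∈ interior (tri a b c)) (hp : p ∈ ({a, b, c} : Finset (ℝ × ℝ)))
    (hq : q ∈ ({a, b, c} : Finset (ℝ × ℝ))) (hpq : 0 < orient x p q)
    (hz : z ∈ ({x, a, b, c} : Finset (ℝ × ℝ))) : z ∉ interior (tri x p q) := by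
  rcases Finset.mem_insert.1 hz with rfl | hz
  · exact (vertex_notMem_interior_tri hpq).1
  have hmem : ∀ {y}, y ∈ ({a, b, c} : Finset (ℝ × ℝ)) → y ∈ tri a b c := fun hy =>
    subset_convexHull ℝ _ (by simpa using hy)
  refine fun h => ?_
  have := interior_mono (tri_subset_tri (interior_subset hx) (hmem hp) (hmem hq)) h
  obtain ⟨ha, hb, hc⟩ := vertex_notMem_interior_tri hD
  simp only [Finset.mem_insert, Finset.mem_singleton] at hz
  rcases hz with rfl | rfl | rfl <;> contradiction

lemma isTriangulation_subdivision (hD : 0 < orient a b c) (hx : x ∈ interior (tri a b c)) :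
    IsTriangulation {x, a, b, c} {{x, a, b}, {x, b, c}, {x, c, a}} := by
  obtain ⟨wa, wb, wc⟩ := (mem_interior_tri_iff hD).1 hx
  have hxab : 0 < orient x a b := by rwa [orient_rotate]
  have hxbc : 0 < orient x b c := by rwa [orient_rotate]
  have hxca : 0 < orient x c a := by rwa [orient_rotate]
  have hG : ∀ S ∈ ({{x, a, b}, {x, b, c}, {x, c, a}} : Finset (Finset (ℝ × ℝ))),
      ∃ p q, S = {x, p, q} ∧ 0 < orient x p q ∧ p ∈ ({a, b, c} : Finset (ℝ × ℝ)) ∧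
        q ∈ ({a, b, c} : Finset (ℝ × ℝ)) := by
    simp only [Finset.mem_insert, Finset.mem_singleton]
    rintro S (rfl | rfl | rfl)
    exacts [⟨a, b, rfl, hxab, by simp, by simp⟩, ⟨b, c, rfl, hxbc, by simp, by simp⟩,
      ⟨c, a, rfl, hxca, by simp, by simp⟩]
  refine ⟨fun S hS => ?_, fun S hS => ?_, fun S hS z hz => ?_,
    pairwiseDisjoint_subdivision hxab hxbc hxca, ?_⟩
  · obtain ⟨p, q, rfl, -, hp, hq⟩ := hG S hS
    simp only [Finset.insert_subset_iff, Finset.singleton_subset_iff, Finset.mem_insert_self,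
      true_and]
    exact ⟨Finset.mem_insert_of_mem hp, Finset.mem_insert_of_mem hq⟩
  · obtain ⟨p, q, rfl, hpq, -, -⟩ := hG S hS
    obtain ⟨h₁, h₂, h₃⟩ := ne_of_orient_ne_zero hpq.ne'
    exact Finset.card_eq_three.2 ⟨x, p, q, h₁, h₂, h₃, rfl⟩
  · obtain ⟨p, q, rfl, hpq, hp, hq⟩ := hG S hS
    rw [convexHull_coe_triple]
    exact notMem_interior_tri_of_mem_interior hD hx hp hq hpq hz
  · have hxT : x ∈ convexHull ℝ (({a, b, c} : Finset (ℝ × ℝ)) : Set (ℝ × ℝ)) := by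
      rw [convexHull_coe_triple]
      exact interior_subset hx
    rw [Finset.coe_insert, convexHull_insert_eq hxT, convexHull_coe_triple]
    refine (tri_subset_union_of_mem_interior hD hx).trans ?_
    simp only [Finset.mem_insert, Finset.mem_singleton, Set.iUnion_iUnion_eq_or_left,
      Set.iUnion_iUnion_eq_left, convexHull_coe_triple, Set.union_assoc, subset_rfl]

lemma card_subdivision (hD : 0 < orient a b c) (hx : x ∉ ({a, b, c} : Finset (ℝ × ℝ))) :
    ({{x, a, b}, {x, b, c}, {x, c, a}} : Finset (Finset (ℝ × ℝ))).card = 3 := by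
  obtain ⟨hab, hac, hbc⟩ := ne_of_orient_ne_zero hD.ne'
  simp only [Finset.mem_insert, Finset.mem_singleton, not_or] at hx
  obtain ⟨hxa, -, hxc⟩ := hx
  refine Finset.card_eq_three.2 ⟨_, _, _, fun h => ?_, fun h => ?_, fun h => ?_, rfl⟩
  · have := (Finset.ext_iff.1 h c).2 (by simp)
    simp [Ne.symm hxc, hac.symm, hbc.symm] at this
  · have := (Finset.ext_iff.1 h c).2 (by simp)
    simp [Ne.symm hxc, hac.symm, hbc.symm] at this
  · have := (Finset.ext_iff.1 h a).2 (by simp)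
    simp [Ne.symm hxa, hab, hac] at this

lemma IsTriangulation.refine (hF : IsTriangulation P F) (hT : T ∈ F)
    (hG : IsTriangulation (insert x T) G) (hx : x ∈ interior (convexHull ℝ (T : Set (ℝ × ℝ)))) :
    IsTriangulation (insert x P) (F.erase T ∪ G) := by
  have hTP := hF.subset T hT
  have hxT : convexHull ℝ ((insert x T : Finset (ℝ × ℝ)) : Set (ℝ × ℝ)) =
      convexHull ℝ (T : Set (ℝ × ℝ)) := by
    rw [Finset.coe_insert, convexHull_insert_eq (interior_subset hx)]
  have hGT : ∀ S ∈ G, interior (convexHull ℝ (S : Set (ℝ × ℝ))) ⊆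
      interior (convexHull ℝ (T : Set (ℝ × ℝ))) := fun S hS =>
    interior_mono (hxT ▸ convexHull_mono (Finset.coe_subset.2 (hG.subset S hS)))
  have hdisj : ∀ S ∈ F.erase T, Disjoint (interior (convexHull ℝ (S : Set (ℝ × ℝ))))
      (interior (convexHull ℝ (T : Set (ℝ × ℝ)))) := fun S hS =>
    hF.pairwiseDisjoint (Finset.mem_of_mem_erase hS) hT (Finset.ne_of_mem_erase hS)
  refine ⟨fun S hS => ?_, fun S hS => ?_, fun S hS p hp => ?_, ?_, ?_⟩
  · rcases Finset.mem_union.1 hS with hS | hS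
    · exact (hF.subset S (Finset.mem_of_mem_erase hS)).trans (Finset.subset_insert _ _)
    · exact (hG.subset S hS).trans (Finset.insert_subset_insert x hTP)
  · rcases Finset.mem_union.1 hS with hS | hS
    exacts [hF.card_eq S (Finset.mem_of_mem_erase hS), hG.card_eq S hS]
  · rcases Finset.mem_union.1 hS with hS | hS <;> rcases Finset.mem_insert.1 hp with rfl | hp
    · exact Set.disjoint_right.1 (hdisj S hS) hx
    · exact hF.empty S (Finset.mem_of_mem_erase hS) p hp
    · exact hG.empty S hS p (Finset.mem_insert_self p T)
    · exact fun h => hF.empty T hT p hp (hGT S hS h)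
  · rw [Finset.coe_union, Set.pairwiseDisjoint_union]
    refine ⟨hF.pairwiseDisjoint.subset (by simp), hG.pairwiseDisjoint,
      fun S hS S' hS' _ => (hdisj S hS).mono_right (hGT S' hS')⟩
  · rw [Finset.coe_insert, convexHull_insert_eq
      (convexHull_mono (Finset.coe_subset.2 hTP) (interior_subset hx))]
    refine hF.covers.trans (Set.iUnion₂_subset fun S hS => ?_)
    by_cases hST : S = T
    · subst hST
      refine (hxT.symm.subset.trans hG.covers).trans (Set.iUnion₂_mono' fun S' hS' => ?_)
      exact ⟨S', Finset.mem_union_right _ hS', subset_rfl⟩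
    · exact Set.subset_iUnion₂_of_subset S (Finset.mem_union_left _ (Finset.mem_erase.2 ⟨hST, hS⟩))
        subset_rfl

lemma IsTriangulation.card_refine (hF : IsTriangulation P F) (hT : T ∈ F) (hxP : x ∉ P)
    (hGx : ∀ S ∈ G, x ∈ S) : (F.erase T ∪ G).card + 1 = F.card + G.card := by
  rw [Finset.card_union_of_disjoint, add_right_comm, Finset.card_erase_add_one hT]
  exact Finset.disjoint_left.2 fun S hS hSG =>
    hxP (hF.subset S (Finset.mem_of_mem_erase hS) (hGx S hSG))

lemma IsTriangulation.exists_of_mem_interiorPoints (hP : GenPos (P : Set (ℝ × ℝ)))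
    (hx : x ∈ interiorPoints P) (hF : IsTriangulation (P.erase x) F) :
    ∃ F', IsTriangulation P F' ∧ F'.card = F.card + 2 := by
  obtain ⟨hxP, hxint⟩ := Finset.mem_filter.1 hx
  have hxhull : x ∈ convexHull ℝ ((P.erase x : Finset (ℝ × ℝ)) : Set (ℝ × ℝ)) := by
    rw [convexHull_erase_eq hxint]
    exact interior_subset hxint
  obtain ⟨T, hT, hxT⟩ := Set.mem_iUnion₂.1 (hF.covers hxhull)
  have hTP : T ⊆ P := (hF.subset T hT).trans (Finset.erase_subset x P)
  obtain ⟨a, b, c, rfl, hD⟩ := exists_eq_triple_orient_pos hP hTP (hF.card_eq T hT)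
  have hxabc : x ∉ ({a, b, c} : Finset (ℝ × ℝ)) := fun h =>
    Finset.notMem_erase x P (hF.subset _ hT h)
  have hxint' : x ∈ interior (tri a b c) := by
    simp only [Finset.mem_insert, Finset.mem_singleton, not_or] at hxabc
    exact hP.mem_interior_tri (hTP (by simp)) (hTP (by simp)) (hTP (by simp)) hxP hxabc.1
      hxabc.2.1 hxabc.2.2 hD (convexHull_coe_triple a b c ▸ hxT)
  have hrefine := hF.refine hT (isTriangulation_subdivision hD hxint')
    (by rwa [convexHull_coe_triple])
  rw [Finset.insert_erase hxP] at hrefine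
  refine ⟨_, hrefine, ?_⟩
  have := hF.card_refine hT (Finset.notMem_erase x P) (x := x)
    (G := {{x, a, b}, {x, b, c}, {x, c, a}}) (by simp)
  rw [card_subdivision hD hxabc] at this
  omega

/-- A point of `P` on the near side of `u w` would lie inside the triangle `v u w`. -/
lemma orient_nonneg_of_wedge (hP : GenPos (P : Set (ℝ × ℝ))) (hconv : interiorPoints P = ∅)
    (hv : v ∈ P) (hu : u ∈ P) (hw : w ∈ P) (hD : 0 < orient v u w)
    (hwedge : ∀ z ∈ P, 0 ≤ orient v u z ∧ 0 ≤ orient w v z) :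
    ∀ z ∈ P.erase v, 0 ≤ orient w u z := by
  intro z hz
  obtain ⟨hzv, hzP⟩ := Finset.mem_erase.1 hz
  by_cases hzu : z = u
  · simp [hzu]
  by_cases hzw : z = w
  · simp [hzw]
  by_contra! hneg
  have hzT : z ∈ tri v u w := (mem_tri_iff hD).2
    ⟨by linarith [orient_swap_left u w z], (hwedge z hzP).2, (hwedge z hzP).1⟩
  have hzint := hP.mem_interior_tri hv hu hw hzP hzv hzu hzw hD hzT
  have : z ∈ interiorPoints P := Finset.mem_filter.2 ⟨hzP,
    interior_mono (convexHull_mono (by simp [Set.insert_subset_iff, hv, hu, hw])) hzint⟩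
  simp [hconv] at this

lemma convexHull_subset_tri_union_of_wedge (hv : v ∈ P) (hu : u ∈ P) (hw : w ∈ P)
    (hD : 0 < orient v u w) (hwedge : ∀ z ∈ P, 0 ≤ orient v u z ∧ 0 ≤ orient w v z)
    (hfar : ∀ z ∈ P.erase v, 0 ≤ orient w u z) :
    convexHull ℝ (P : Set (ℝ × ℝ)) ⊆
      tri v u w ∪ convexHull ℝ ((P.erase v : Finset (ℝ × ℝ)) : Set (ℝ × ℝ)) := by
  obtain ⟨hvu, hvw, -⟩ := ne_of_orient_ne_zero hD.ne'
  have hne : (P.erase v : Set (ℝ × ℝ)).Nonempty := ⟨u, by simp [hu, hvu.symm]⟩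
  conv_lhs => rw [← Finset.insert_erase hv, Finset.coe_insert, convexHull_insert hne]
  exact convexJoin_subset_tri_union (convex_convexHull ℝ _)
    (subset_convexHull ℝ _ (by simp [hu, hvu.symm]))
    (subset_convexHull ℝ _ (by simp [hw, hvw.symm]))
    hD (fun z hz => convexHull_subset_setOf_orient_nonneg hfar hz)
    (fun z hz => convexHull_subset_setOf_orient_nonneg
      (fun z hz => (hwedge z (Finset.mem_of_mem_erase hz)).1) hz)
    (fun z hz => convexHull_subset_setOf_orient_nonneg
      (fun z hz => (hwedge z (Finset.mem_of_mem_erase hz)).2) hz)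

lemma IsTriangulation.insert_ear (hP : GenPos (P : Set (ℝ × ℝ))) (hconv : interiorPoints P = ∅)
    (hv : v ∈ P) (hu : u ∈ P) (hw : w ∈ P) (hD : 0 < orient v u w)
    (hwedge : ∀ z ∈ P, 0 ≤ orient v u z ∧ 0 ≤ orient w v z)
    (hF : IsTriangulation (P.erase v) F) : IsTriangulation P (insert {v, u, w} F) := by
  obtain ⟨hvu, hvw, huw⟩ := ne_of_orient_ne_zero hD.ne'
  have hfar := orient_nonneg_of_wedge hP hconv hv hu hw hD hwedge
  have hTfar : ∀ T ∈ F, ∀ z ∈ convexHull ℝ (T : Set (ℝ × ℝ)), 0 ≤ orient w u z :=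
    fun T hT z hz => convexHull_subset_setOf_orient_nonneg hfar
      (convexHull_mono (Finset.coe_subset.2 (hF.subset T hT)) hz)
  have hnear : ∀ z ∈ interior (tri v u w), orient w u z < 0 := fun z hz => by
    linarith [((mem_interior_tri_iff hD).1 hz).1, orient_swap_left u w z]
  refine ⟨fun T hT => ?_, fun T hT => ?_, fun T hT p hp => ?_, ?_, ?_⟩
  · rcases Finset.mem_insert.1 hT with rfl | hT
    · simp [Finset.insert_subset_iff, hv, hu, hw]
    · exact (hF.subset T hT).trans (Finset.erase_subset v P)
  · rcases Finset.mem_insert.1 hT with rfl | hT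
    · exact Finset.card_eq_three.2 ⟨v, u, w, hvu, hvw, huw, rfl⟩
    · exact hF.card_eq T hT
  · rcases Finset.mem_insert.1 hT with rfl | hTF <;> rcases eq_or_ne p v with rfl | hpv
    · rw [convexHull_coe_triple]
      exact (vertex_notMem_interior_tri hD).1
    · rw [convexHull_coe_triple]
      exact fun h => (hnear p h).not_ge (hfar p (Finset.mem_erase.2 ⟨hpv, hp⟩))
    · intro h
      have := hTfar T hTF p (interior_subset h)
      rw [orient_rotate w u p, orient_rotate u p w, orient_swap] at this
      linarith
    · exact hF.empty T hTF p (Finset.mem_erase.2 ⟨hpv, hp⟩)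
  · rw [Finset.coe_insert]
    refine hF.pairwiseDisjoint.insert fun T hT _ => Set.disjoint_left.2 fun z hz hz' => ?_
    rw [convexHull_coe_triple] at hz
    exact (hnear z hz).not_ge (hTfar T hT z (interior_subset hz'))
  · refine (convexHull_subset_tri_union_of_wedge hv hu hw hD hwedge hfar).trans
      (Set.union_subset ?_ (hF.covers.trans ?_))
    · rw [← convexHull_coe_triple]
      exact Set.subset_biUnion_of_mem
        (u := fun T : Finset (ℝ × ℝ) => convexHull ℝ (T : Set (ℝ × ℝ))) (Finset.mem_insert_self _ F)
    · exact Set.biUnion_mono (fun T hT => Finset.mem_insert_of_mem hT) fun _ _ => subset_rfl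

end Triangulation

theorem exists_isTriangulation {P : Finset (ℝ × ℝ)} (hP : GenPos (P : Set (ℝ × ℝ)))
    (h3 : 3 ≤ P.card) :
    ∃ F, IsTriangulation P F ∧ P.card - 2 + (interiorPoints P).card ≤ F.card := by
  induction P using Finset.strongInduction with
  | H P ih =>
  have hPe : ∀ {z}, z ∈ P → GenPos ((P.erase z : Finset (ℝ × ℝ)) : Set (ℝ × ℝ)) := fun _ =>
    hP.mono (Finset.coe_subset.2 (Finset.erase_subset _ _))
  rcases (interiorPoints P).eq_empty_or_nonempty with hconv | ⟨x, hx⟩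
  · rcases h3.eq_or_lt with h3 | h4
    · exact ⟨{P}, isTriangulation_singleton hP h3.symm, by simp [hconv, ← h3]⟩
    obtain ⟨v, hv, u, hu, w, hw, hD, hwedge⟩ := exists_wedge hP h3
    obtain ⟨F, hF, hcard⟩ := ih _ (Finset.erase_ssubset hv) (hPe hv)
      (by rw [Finset.card_erase_of_mem hv]; omega)
    have hnew : {v, u, w} ∉ F := fun h => Finset.notMem_erase v P (hF.subset _ h (by simp))
    refine ⟨_, hF.insert_ear hP hconv hv hu hw hD hwedge, ?_⟩
    rw [Finset.card_insert_of_notMem hnew, hconv, Finset.card_empty]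
    rw [Finset.card_erase_of_mem hv] at hcard
    omega
  · have hxP := (Finset.mem_filter.1 hx).1
    have h4 : 4 ≤ P.card := by
      by_contra! h
      simp [interiorPoints_eq_empty_of_card_eq_three hP (by omega)] at hx
    obtain ⟨F, hF, hcard⟩ := ih _ (Finset.erase_ssubset hxP) (hPe hxP)
      (by rw [Finset.card_erase_of_mem hxP]; omega)
    obtain ⟨F', hF', hF'card⟩ := hF.exists_of_mem_interiorPoints hP hx
    refine ⟨F', hF', ?_⟩
    rw [interiorPoints_erase hx, Finset.card_erase_of_mem hx, Finset.card_erase_of_mem hxP] at hcard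
    have := Finset.card_pos.2 ⟨x, hx⟩
    omega

/-- Each triangle of a triangulation of `P` contains a point of `Q` of its own. -/
theorem card_sub_two_add_card_interiorPoints_le {P Q : Finset (ℝ × ℝ)}
    (hP : GenPos (P : Set (ℝ × ℝ))) (h3 : 3 ≤ P.card)
    (hQ : ∀ T ⊆ P, T.card = 3 → (∀ p ∈ P, p ∉ interior (convexHull ℝ (T : Set (ℝ × ℝ)))) →
      ∃ q ∈ Q, q ∈ interior (convexHull ℝ (T : Set (ℝ × ℝ)))) :
    P.card - 2 + (interiorPoints P).card ≤ Q.card := by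
  obtain ⟨F, hF, hcard⟩ := exists_isTriangulation hP h3
  exact hcard.trans (hF.pairwiseDisjoint.card_le_of_forall_exists_mem fun T hT =>
    hQ T (hF.subset T hT) (hF.card_eq T hT) (hF.empty T hT))

section Coloring

variable {α : Type*} {S : Finset (ℝ × ℝ)} {χ : ℝ × ℝ → α}

def MonochromaticTrianglesStabbed (S : Finset (ℝ × ℝ)) (χ : ℝ × ℝ → α) : Prop :=
  ∀ T ⊆ S, T.card = 3 → (∀ z ∈ T, ∀ z' ∈ T, χ z = χ z') →
    ∃ p ∈ S, p ∈ interior (convexHull ℝ (T : Set (ℝ × ℝ)))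

lemma monochromaticTrianglesStabbed_of_forall
    (h : ∀ a ∈ S, ∀ b ∈ S, ∀ d ∈ S, a ≠ b → a ≠ d → b ≠ d → χ a = χ b → χ b = χ d →
      ∃ p ∈ S, p ∈ interior (convexHull ℝ ({a, b, d} : Set (ℝ × ℝ)))) :
    MonochromaticTrianglesStabbed S χ := by
  intro T hT h3 hχ
  obtain ⟨a, b, d, hab, had, hbd, rfl⟩ := Finset.card_eq_three.1 h3
  simpa using h a (hT (by simp)) b (hT (by simp)) d (hT (by simp)) hab had hbd
    (hχ a (by simp) b (by simp)) (hχ b (by simp) d (by simp))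

variable [DecidableEq α]

def colorClass (S : Finset (ℝ × ℝ)) (χ : ℝ × ℝ → α) (i : α) : Finset (ℝ × ℝ) :=
  S.filter (χ · = i)

def otherColorInside (S : Finset (ℝ × ℝ)) (χ : ℝ × ℝ → α) (i : α) : Finset (ℝ × ℝ) :=
  S.filter fun z => χ z ≠ i ∧ z ∈ interior (convexHull ℝ (colorClass S χ i : Set (ℝ × ℝ)))

lemma card_colorClass_sub_two_add_le (hgp : GenPos (S : Set (ℝ × ℝ)))
    (hS : MonochromaticTrianglesStabbed S χ) {i : α} (h3 : 3 ≤ (colorClass S χ i).card) :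
    (colorClass S χ i).card - 2 + (interiorPoints (colorClass S χ i)).card ≤
      (otherColorInside S χ i).card := by
  have hRS : colorClass S χ i ⊆ S := Finset.filter_subset _ _
  refine card_sub_two_add_card_interiorPoints_le (hgp.mono (Finset.coe_subset.2 hRS)) h3
    fun T hT h3 hempty => ?_
  have hTi : ∀ z ∈ T, χ z = i := fun z hz => (Finset.mem_filter.1 (hT hz)).2
  obtain ⟨p, hpS, hp⟩ := hS T (hT.trans hRS) h3 fun z hz z' hz' =>
    (hTi z hz).trans (hTi z' hz').symm
  refine ⟨p, Finset.mem_filter.2 ⟨hpS, fun hpi => hempty p (Finset.mem_filter.2 ⟨hpS, hpi⟩) hp,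
    interior_mono (convexHull_mono (Finset.coe_subset.2 hT)) hp⟩, hp⟩

lemma card_otherColorInside_sub_two_le {χ : ℝ × ℝ → Fin 2} (hgp : GenPos (S : Set (ℝ × ℝ)))
    (hS : MonochromaticTrianglesStabbed S χ) {i : Fin 2} (h3 : 3 ≤ (otherColorInside S χ i).card) :
    (otherColorInside S χ i).card - 2 ≤ (interiorPoints (colorClass S χ i)).card := by
  have hBS : otherColorInside S χ i ⊆ S := Finset.filter_subset _ _
  have hstab : ∀ T ⊆ otherColorInside S χ i, T.card = 3 →
      (∀ p ∈ otherColorInside S χ i, p ∉ interior (convexHull ℝ (T : Set (ℝ × ℝ)))) →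
      ∃ q ∈ interiorPoints (colorClass S χ i), q ∈ interior (convexHull ℝ (T : Set (ℝ × ℝ))) := by
    intro T hT h3 hempty
    have hTi : ∀ z ∈ T, χ z ≠ i := fun z hz => (Finset.mem_filter.1 (hT hz)).2.1
    obtain ⟨p, hpS, hp⟩ := hS T (hT.trans hBS) h3 fun z hz z' hz' => by
      have := hTi z hz; have := hTi z' hz'; omega
    have hp_int : p ∈ interior (convexHull ℝ (colorClass S χ i : Set (ℝ × ℝ))) :=
      convexHull_min (fun z hz => (Finset.mem_filter.1 (hT hz)).2.2)
        (convex_convexHull ℝ _).interior (interior_subset hp)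
    have hpi : χ p = i := by
      by_contra hpi
      exact hempty p (Finset.mem_filter.2 ⟨hpS, hpi, hp_int⟩) hp
    exact ⟨p, Finset.mem_filter.2 ⟨Finset.mem_filter.2 ⟨hpS, hpi⟩, hp_int⟩, hp⟩
  have := card_sub_two_add_card_interiorPoints_le (hgp.mono (Finset.coe_subset.2 hBS)) h3 hstab
  omega

end Coloring

/-- Every 2-colored set of 10 points in general position contains a monochromatic
empty triangle. -/
theorem ten_points_two_colors_empty (S : Finset (ℝ × ℝ)) (hcard : S.card = 10)
    (hgp : GenPos (S : Set (ℝ × ℝ))) (χ : ℝ × ℝ → Fin 2) :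
    ∃ a ∈ S, ∃ b ∈ S, ∃ d ∈ S, a ≠ b ∧ a ≠ d ∧ b ≠ d ∧ χ a = χ b ∧ χ b = χ d ∧
      ∀ p ∈ S, p ∉ interior (convexHull ℝ ({a, b, d} : Set (ℝ × ℝ))) := by
  by_contra! h
  have hS := monochromaticTrianglesStabbed_of_forall h
  obtain ⟨i, -, hi⟩ := Finset.exists_le_card_fiber_of_mul_le_card_of_maps_to (s := S) (n := 5)
    (fun z _ => Finset.mem_univ (χ z)) Finset.univ_nonempty (by simp [hcard])
  have hR : 5 ≤ (colorClass S χ i).card := hi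
  have h₁ := card_colorClass_sub_two_add_le hgp hS (by omega : 3 ≤ (colorClass S χ i).card)
  have h₂ := card_otherColorInside_sub_two_le hgp hS (i := i) (by omega)
  omega
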